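/- Let $c_1, c_2, \delta > 0$ satisfy $\delta(c_1 + c_2) - 4 < 0$. Then: if $0 < c_1 < \frac{1}{3} c_2$ or $c_1 \geq 3 c_2$, we have $\delta < \frac{4(c_1+c_2)}{4 c_1 c_2 - (c_2 - c_1)^2}$ whenever $4 c_1 c_2 - (c_2-c_1)^2 > 0$; and if $\frac{1}{3} c_2 < c_1 < 3 c_2$, we have $\delta < \frac{2(c_1+c_2)}{(c_2-c_1)^2}$ whenever $c_1 \neq c_2$. -/
import Mathlib

theorem stmt9 (c1 c2 δ : ℝ) (hc1 : 0 < c1) (hc2 : 0 < c2) (hδ : 0 < δ)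
    (h : δ * (c1 + c2) - 4 < 0) :
    ((0 < c1 ∧ c1 < c2 / 3) ∨ c1 ≥ 3 * c2 →
      4 * c1 * c2 - (c2 - c1) ^ 2 > 0 →
        δ < 4 * (c1 + c2) / (4 * c1 * c2 - (c2 - c1) ^ 2)) ∧
    (c2 / 3 < c1 ∧ c1 < 3 * c2 →
      c1 ≠ c2 → δ < 2 * (c1 + c2) / (c2 - c1) ^ 2) := by
  constructor
  · intro _ hpos
    rw [lt_div_iff₀ hpos]
    nlinarith [sq_nonneg (c1 - c2), mul_pos hδ (add_pos hc1 hc2)]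
  · rintro ⟨h1, h2⟩ hne
    have hne' : c2 - c1 ≠ 0 := sub_ne_zero.2 (Ne.symm hne)
    have hsq : (0:ℝ) < (c2 - c1) ^ 2 := by positivity
    rw [lt_div_iff₀ hsq]
    nlinarith [mul_pos (sub_pos.2 h2) (by linarith : (0:ℝ) < 3 * c1 - c2)]
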